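/- arXiv:1502.06220 — 7 statements merged into one kernel-verified Lean document; each statement's English description precedes it below -/
import Mathlib

section
/- Let μ > 0 and n ≥ 1. Let R_1, …, R_N be n×M real matrices with R_i R_iᵀ = I_n, let Ẑ_1, …, Ẑ_N be n×n real symmetric idempotent matrices, and suppose the index set {1,…,N} can be partitioned into n groups Ω_1, …, Ω_n such that R_k R_lᵀ = 0 for all distinct k, l belonging to the same group. Suppose further that W = (1/(μ+n))·(μ·I_M + Σ_{i=1}^N R_iᵀ Ẑ_i R_i) satisfies W 𝟙_M = 𝟙_M. Then the spectral norm of W equals 1, i.e. ‖W‖₂ = 1; equivalently the largest eigenvalue of W is exactly 1. -/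
/-!
Each `Rᵢᵀ Ẑᵢ Rᵢ` lies between `0` and `Rᵢᵀ Rᵢ` in the Loewner order, and within one group the
`Rᵢᵀ Rᵢ` are mutually orthogonal projections, so their sum is a projection and hence `≤ I`.
Summing over the `n` groups gives `0 ≤ ∑ᵢ Rᵢᵀ Ẑᵢ Rᵢ ≤ n I`, hence `0 ≤ W ≤ I`. For a symmetric
operator these bounds on the Rayleigh quotient give `‖W‖₂ ≤ 1`, and the fixed vector `𝟙` gives
`‖W‖₂ ≥ 1`.
-/

open Matrix
open scoped MatrixOrder ComplexOrder

namespace ContinuousLinearMap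

variable {𝕜 E : Type*} [RCLike 𝕜] [NormedAddCommGroup E] [InnerProductSpace 𝕜 E]

theorem norm_le_one_of_nonneg_of_le_one {T : E →L[𝕜] E} (h0 : 0 ≤ T) (h1 : T ≤ 1) :
    ‖T‖ ≤ 1 := by
  rw [nonneg_iff_isPositive] at h0
  rw [T.norm_eq_iSup_rayleighQuotient h0.isSymmetric]
  refine ciSup_le fun x => ?_
  have hre : 0 ≤ RCLike.re (inner 𝕜 (T x) x) := h0.re_inner_nonneg_left x
  have hre_le : RCLike.re (inner 𝕜 (T x) x) ≤ ‖x‖ ^ 2 := by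
    have := ((le_def T 1).mp h1).re_inner_nonneg_left x
    rwa [_root_.sub_apply, one_apply_eq_self, inner_sub_left, map_sub,
      ← norm_sq_eq_re_inner (𝕜 := 𝕜), sub_nonneg] at this
  rw [rayleighQuotient, reApplyInnerSelf_apply, abs_of_nonneg (div_nonneg hre (sq_nonneg _))]
  exact div_le_one_of_le₀ hre_le (sq_nonneg _)

theorem one_le_opNorm_of_apply_eq_self {T : E →L[𝕜] E} {x : E} (hx : x ≠ 0) (hTx : T x = x) :
    1 ≤ ‖T‖ :=
  (le_mul_iff_one_le_left (norm_pos_iff.mpr hx)).mp (by simpa only [hTx] using T.le_opNorm x)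

end ContinuousLinearMap

namespace Matrix

section Projection

variable {α : Type*} [CommSemiring α] [StarRing α] {ι k m : Type*} [Fintype k] [DecidableEq k]
  [Fintype m]

theorem isStarProjection_sum_conjTranspose_mul_self {s : Finset ι} {R : ι → Matrix k m α}
    (hR : ∀ i ∈ s, R i * (R i)ᴴ = 1) (horth : ∀ i ∈ s, ∀ j ∈ s, i ≠ j → R i * (R j)ᴴ = 0) :
    IsStarProjection (∑ i ∈ s, (R i)ᴴ * R i) where
  isSelfAdjoint := isSelfAdjoint_sum s fun i _ => isHermitian_conjTranspose_mul_self (R i)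
  isIdempotentElem := by
    rw [IsIdempotentElem, Finset.sum_mul_sum]
    refine Finset.sum_congr rfl fun i hi => ?_
    rw [Finset.sum_eq_single_of_mem i hi fun j hj hji => by
      rw [Matrix.mul_assoc, ← Matrix.mul_assoc (R i), horth i hi j hj hji.symm, Matrix.zero_mul,
        Matrix.mul_zero]]
    rw [Matrix.mul_assoc, ← Matrix.mul_assoc (R i), hR i hi, Matrix.one_mul]

end Projection

variable {𝕜 : Type*} [RCLike 𝕜]

section LoewnerOrder

variable {ι k m : Type*} [Fintype k] [Fintype m]

theorem conjTranspose_mul_mul_le_conjTranspose_mul_mul {A B : Matrix k k 𝕜} (h : A ≤ B)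
    (C : Matrix k m 𝕜) : Cᴴ * A * C ≤ Cᴴ * B * C := by
  rw [le_iff, ← Matrix.sub_mul, ← Matrix.mul_sub]
  exact (le_iff.mp h).conjTranspose_mul_mul_same C

variable [DecidableEq k] [DecidableEq m]

theorem sum_conjTranspose_mul_mul_le_one {s : Finset ι} {R : ι → Matrix k m 𝕜}
    {Z : ι → Matrix k k 𝕜} (hZ : ∀ i ∈ s, IsStarProjection (Z i))
    (hR : ∀ i ∈ s, R i * (R i)ᴴ = 1) (horth : ∀ i ∈ s, ∀ j ∈ s, i ≠ j → R i * (R j)ᴴ = 0) :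
    ∑ i ∈ s, (R i)ᴴ * Z i * R i ≤ 1 :=
  calc ∑ i ∈ s, (R i)ᴴ * Z i * R i ≤ ∑ i ∈ s, (R i)ᴴ * 1 * R i :=
        Finset.sum_le_sum fun i hi =>
          conjTranspose_mul_mul_le_conjTranspose_mul_mul (hZ i hi).le_one (R i)
    _ ≤ 1 := by
        simpa only [Matrix.mul_one] using
          (isStarProjection_sum_conjTranspose_mul_self hR horth).le_one

theorem sum_conjTranspose_mul_mul_le_card_smul_one [Fintype ι] {κ : Type*} [Fintype κ]
    {R : ι → Matrix k m 𝕜} {Z : ι → Matrix k k 𝕜} (g : ι → κ)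
    (hZ : ∀ i, IsStarProjection (Z i)) (hR : ∀ i, R i * (R i)ᴴ = 1)
    (horth : ∀ i j, i ≠ j → g i = g j → R i * (R j)ᴴ = 0) :
    ∑ i, (R i)ᴴ * Z i * R i ≤ Fintype.card κ • (1 : Matrix m m 𝕜) := by
  classical
  calc ∑ i, (R i)ᴴ * Z i * R i
        = ∑ c, ∑ i ∈ {i | g i = c}, (R i)ᴴ * Z i * R i := (Finset.sum_fiberwise _ g _).symm
    _ ≤ ∑ _c : κ, (1 : Matrix m m 𝕜) := Finset.sum_le_sum fun c _ =>
        sum_conjTranspose_mul_mul_le_one (fun i _ => hZ i) (fun i _ => hR i)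
          fun i hi j hj hij => horth i j hij <| by
            rw [(Finset.mem_filter.mp hi).2, (Finset.mem_filter.mp hj).2]
    _ = Fintype.card κ • (1 : Matrix m m 𝕜) := by rw [Finset.sum_const, Finset.card_univ]

end LoewnerOrder

section L2OpNorm

variable {m : Type*} [Fintype m] [DecidableEq m]

theorem toEuclideanCLM_nonneg_iff {A : Matrix m m 𝕜} :
    0 ≤ toEuclideanCLM (n := m) (𝕜 := 𝕜) A ↔ 0 ≤ A := by
  rw [ContinuousLinearMap.nonneg_iff_isPositive, nonneg_iff_posSemidef,
    ← isPositive_toEuclideanLin_iff, ← LinearMap.isPositive_toContinuousLinearMap_iff]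
  rfl

theorem norm_toEuclideanCLM_le_one {A : Matrix m m 𝕜} (h0 : 0 ≤ A) (h1 : A ≤ 1) :
    ‖toEuclideanCLM (n := m) (𝕜 := 𝕜) A‖ ≤ 1 := by
  have h1' : 0 ≤ toEuclideanCLM (n := m) (𝕜 := 𝕜) (1 - A) :=
    toEuclideanCLM_nonneg_iff.mpr (sub_nonneg.mpr h1)
  rw [map_sub, map_one, ContinuousLinearMap.nonneg_iff_isPositive] at h1'
  exact ContinuousLinearMap.norm_le_one_of_nonneg_of_le_one (toEuclideanCLM_nonneg_iff.mpr h0) h1'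

end L2OpNorm

end Matrix

theorem ksvd_filter_spectral_norm_one_general
    (μ : ℝ) (hμ : 0 < μ) (n N M : ℕ) (hM : 0 < M)
    (R : Fin N → Matrix (Fin n) (Fin M) ℝ)
    (hRR : ∀ i, R i * (R i)ᵀ = 1)
    (Z : Fin N → Matrix (Fin n) (Fin n) ℝ)
    (hZsymm : ∀ i, (Z i)ᵀ = Z i)
    (hZidem : ∀ i, Z i * Z i = Z i)
    (g : Fin N → Fin n)
    (hg : ∀ k l, k ≠ l → g k = g l → R k * (R l)ᵀ = 0)
    (W : Matrix (Fin M) (Fin M) ℝ)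
    (hW : W = (μ + (n : ℝ))⁻¹ •
      (μ • (1 : Matrix (Fin M) (Fin M) ℝ) + ∑ i, (R i)ᵀ * Z i * R i))
    (hW1 : W *ᵥ (fun _ => (1 : ℝ)) = fun _ => (1 : ℝ)) :
    ‖Matrix.toEuclideanCLM (𝕜 := ℝ) W‖ = 1 := by
  have hZ : ∀ i, IsStarProjection (Z i) := fun i =>
    ⟨hZidem i, by rw [IsSelfAdjoint, star_eq_conjTranspose, conjTranspose_eq_transpose_of_trivial,
      hZsymm]⟩
  simp_rw [← conjTranspose_eq_transpose_of_trivial] at hRR hg hW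
  set S := ∑ i, (R i)ᴴ * Z i * R i
  have hS0 : 0 ≤ S := Finset.sum_nonneg fun i _ => by
    simpa using conjTranspose_mul_mul_le_conjTranspose_mul_mul (hZ i).nonneg (R i)
  have hSn : S ≤ (n : ℝ) • 1 := by
    have := sum_conjTranspose_mul_mul_le_card_smul_one g hZ hRR hg
    rwa [Fintype.card_fin, ← Nat.cast_smul_eq_nsmul ℝ] at this
  have hW0 : 0 ≤ W :=
    hW ▸ smul_nonneg (by positivity) (add_nonneg (smul_nonneg hμ.le zero_le_one) hS0)
  have hW_le_one : W ≤ 1 :=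
    calc W ≤ (μ + n)⁻¹ • (μ • 1 + (n : ℝ) • 1) := by rw [hW]; gcongr
      _ = 1 := by rw [← add_smul, smul_smul, inv_mul_cancel₀ (by positivity), one_smul]
  refine le_antisymm (norm_toEuclideanCLM_le_one hW0 hW_le_one)
    (ContinuousLinearMap.one_le_opNorm_of_apply_eq_self (x := WithLp.toLp 2 fun _ => 1) ?_ ?_)
  · exact fun h => by simpa using congr_fun (congrArg WithLp.ofLp h) ⟨0, hM⟩
  · rw [toEuclideanCLM_toLp, hW1]

/-- Under periodic boundary conditions, if the `N` overlapping patches can be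
partitioned into `n` groups (encoded by `g : Fin N → Fin n`) of pairwise non-overlapping
patches, each `R i` has orthonormal rows, each `Z i` is symmetric idempotent, and the
K-SVD filter matrix `W = (1/(μ+n)) • (μ • I + ∑ i, (R i)ᵀ * Z i * R i)` preserves the
all-ones vector, then the spectral norm of `W` equals 1. -/
theorem ksvd_filter_spectral_norm_one
    (μ : ℝ) (hμ : 0 < μ) (n N M : ℕ) (hn : 1 ≤ n) (hM : 0 < M)
    (R : Fin N → Matrix (Fin n) (Fin M) ℝ)
    (hRR : ∀ i, R i * (R i)ᵀ = 1)
    (Z : Fin N → Matrix (Fin n) (Fin n) ℝ)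
    (hZsymm : ∀ i, (Z i)ᵀ = Z i)
    (hZidem : ∀ i, Z i * Z i = Z i)
    (g : Fin N → Fin n)
    (hg : ∀ k l, k ≠ l → g k = g l → R k * (R l)ᵀ = 0)
    (W : Matrix (Fin M) (Fin M) ℝ)
    (hW : W = (μ + (n : ℝ))⁻¹ •
      (μ • (1 : Matrix (Fin M) (Fin M) ℝ) + ∑ i, (R i)ᵀ * Z i * R i))
    (hW1 : W *ᵥ (fun _ => (1 : ℝ)) = fun _ => (1 : ℝ)) :
    ‖Matrix.toEuclideanCLM (𝕜 := ℝ) W‖ = 1 :=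
  ksvd_filter_spectral_norm_one_general μ hμ n N M hM R hRR Z hZsymm hZidem g hg W hW hW1
end

section
/- Let W be an M×M real matrix with ‖W − I‖₂ = γ < 1 (spectral/operator norm), let y ∈ ℝ^M, and define the SOS sequence by x_0 = 0 and x_{k+1} = W(y + x_k) − x_k. Then the matrix 2I − W is invertible, the point x* = (2I − W)⁻¹ W y is the unique solution of x = W(y + x) − x, the error e_k = x_k − x* satisfies e_k = (W − I)^k e_0, and ‖e_k‖₂ ≤ γ^k · ‖e_0‖₂, so that x_k converges to x* as k → ∞. -/
open Matrix

set_option maxHeartbeats 1600000 in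
/-- Let `W` be an `M × M` real matrix with `‖W - I‖₂ = γ < 1`, `y ∈ ℝ^M`,
and define the SOS sequence `x 0 = 0`, `x (k+1) = W (y + x k) - x k`. Then `2I - W` is
invertible, `x* = (2I - W)⁻¹ W y` is the unique solution of `x = W (y + x) - x`, the error
`e k = x k - x*` satisfies `e k = (W - I)^k (e 0)`, `‖e k‖ ≤ γ^k * ‖e 0‖`, and
`x k → x*`. -/
theorem sos_convergence
    (M : ℕ) (W : Matrix (Fin M) (Fin M) ℝ) (γ : ℝ)
    (hγ : ‖Matrix.toEuclideanCLM (𝕜 := ℝ) (n := Fin M) (W - 1)‖ = γ) (hγ1 : γ < 1)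
    (y : EuclideanSpace ℝ (Fin M))
    (x : ℕ → EuclideanSpace ℝ (Fin M)) (hx0 : x 0 = 0)
    (hx : ∀ k, x (k + 1) = Matrix.toEuclideanCLM (𝕜 := ℝ) (n := Fin M) W (y + x k) - x k) :
    IsUnit ((2 : ℝ) • (1 : Matrix (Fin M) (Fin M) ℝ) - W) ∧
    ∃ xstar : EuclideanSpace ℝ (Fin M),
      xstar = Matrix.toEuclideanCLM (𝕜 := ℝ) (n := Fin M)
        ((((2 : ℝ) • (1 : Matrix (Fin M) (Fin M) ℝ) - W))⁻¹ * W) y ∧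
      (xstar = Matrix.toEuclideanCLM (𝕜 := ℝ) (n := Fin M) W (y + xstar) - xstar) ∧
      (∀ z : EuclideanSpace ℝ (Fin M),
        z = Matrix.toEuclideanCLM (𝕜 := ℝ) (n := Fin M) W (y + z) - z → z = xstar) ∧
      (∀ k, x k - xstar =
        Matrix.toEuclideanCLM (𝕜 := ℝ) (n := Fin M) ((W - 1) ^ k) (x 0 - xstar)) ∧
      (∀ k, ‖x k - xstar‖ ≤ γ ^ k * ‖x 0 - xstar‖) ∧
      Filter.Tendsto x Filter.atTop (nhds xstar) := by
  set T := Matrix.toEuclideanCLM (𝕜 := ℝ) (n := Fin M) with hTdef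
  set A : Matrix (Fin M) (Fin M) ℝ := (2 : ℝ) • (1 : Matrix (Fin M) (Fin M) ℝ) - W with hAdef
  have hγ0 : 0 ≤ γ := hγ ▸ norm_nonneg _
  have hγlt : ‖T (W - 1)‖ < 1 := by rw [hγ]; exact hγ1
  have hA1 : A = 1 - (W - 1) := by
    rw [hAdef, two_smul]; abel
  have hTA : T A = 1 - T (W - 1) := by rw [hA1, _root_.map_sub, _root_.map_one]
  -- invertibility
  have hUA : IsUnit (T A) := by
    rw [hTA]; exact (Units.oneSub _ hγlt).isUnit
  have hU : IsUnit A := by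
    have := hUA.map (Matrix.toEuclideanCLM (𝕜 := ℝ) (n := Fin M)).symm
    simpa using this
  have hdet : IsUnit A.det := (Matrix.isUnit_iff_isUnit_det A).mp hU
  have hmulinv : A * A⁻¹ = 1 := Matrix.mul_nonsing_inv A hdet
  -- the candidate fixed point
  set xstar : EuclideanSpace ℝ (Fin M) := T (A⁻¹ * W) y with hxstar
  -- `T A xstar = T W y`
  have hkey : T A xstar = T W y := by
    have h : (T A) * (T (A⁻¹ * W)) = T W := by
      rw [← _root_.map_mul, ← mul_assoc, hmulinv, one_mul]
    rw [hxstar, ← ContinuousLinearMap.mul_apply, h]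
  have hAv : ∀ v : EuclideanSpace ℝ (Fin M), T A v = (2 : ℝ) • v - T W v := by
    intro v
    rw [hAdef, _root_.map_sub, _root_.map_smul, _root_.map_one]
    simp [ContinuousLinearMap.sub_apply, ContinuousLinearMap.smul_apply,
      ContinuousLinearMap.one_apply]
  -- fixed point property
  have hfix : xstar = T W (y + xstar) - xstar := by
    rw [map_add, ← hkey, hAv, two_smul]; abel
  -- one-step error identity
  have hstep : ∀ v : EuclideanSpace ℝ (Fin M),
      T W (y + v) - v - xstar = T (W - 1) (v - xstar) := by
    intro v
    have e : T (W - 1) = T W - 1 := by rw [_root_.map_sub, _root_.map_one]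
    have h1 : T (W - 1) (v - xstar) = T W v - T W xstar - (v - xstar) := by
      rw [e]
      simp only [ContinuousLinearMap.sub_apply, ContinuousLinearMap.one_apply, map_sub]
      abel
    rw [h1, map_add]
    have h2 : T W y = (2 : ℝ) • xstar - T W xstar := by rw [← hAv, hkey]
    rw [h2, two_smul]; abel
  -- uniqueness
  have huniq : ∀ z : EuclideanSpace ℝ (Fin M),
      z = T W (y + z) - z → z = xstar := by
    intro z hz
    have h1 := hstep z
    rw [← hz] at h1
    have h2 : ‖z - xstar‖ ≤ γ * ‖z - xstar‖ := by
      calc ‖z - xstar‖ = ‖T (W - 1) (z - xstar)‖ := by rw [← h1]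
        _ ≤ ‖T (W - 1)‖ * ‖z - xstar‖ := ContinuousLinearMap.le_opNorm _ _
        _ = γ * ‖z - xstar‖ := by rw [hγ]
    have h3 : ‖z - xstar‖ = 0 := by nlinarith [norm_nonneg (z - xstar)]
    exact sub_eq_zero.mp (norm_eq_zero.mp h3)
  -- error formula
  have herr : ∀ k, x k - xstar = T ((W - 1) ^ k) (x 0 - xstar) := by
    intro k
    induction k with
    | zero => simp
    | succ k ih =>
      have h : x (k + 1) - xstar = T (W - 1) (x k - xstar) := by
        rw [hx k]; exact hstep (x k)
      have e : T ((W - 1) ^ (k + 1)) = T (W - 1) * T ((W - 1) ^ k) := by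
        rw [pow_succ', _root_.map_mul]
      rw [h, ih, e, ContinuousLinearMap.mul_apply]
  -- norm bound
  have hbound : ∀ k, ‖x k - xstar‖ ≤ γ ^ k * ‖x 0 - xstar‖ := by
    intro k
    cases k with
    | zero => simp
    | succ k =>
      rw [herr (k + 1)]
      calc ‖T ((W - 1) ^ (k + 1)) (x 0 - xstar)‖
          ≤ ‖T ((W - 1) ^ (k + 1))‖ * ‖x 0 - xstar‖ := ContinuousLinearMap.le_opNorm _ _
        _ ≤ ‖T (W - 1)‖ ^ (k + 1) * ‖x 0 - xstar‖ := by
            refine mul_le_mul_of_nonneg_right ?_ (norm_nonneg _)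
            rw [map_pow]
            exact norm_pow_le' _ (Nat.succ_pos k)
        _ = γ ^ (k + 1) * ‖x 0 - xstar‖ := by rw [hγ]
  -- convergence
  have htend : Filter.Tendsto x Filter.atTop (nhds xstar) := by
    rw [tendsto_iff_norm_sub_tendsto_zero]
    apply squeeze_zero (fun k => norm_nonneg _) hbound
    simpa using (tendsto_pow_atTop_nhds_zero_of_lt_one hγ0 hγ1).mul_const ‖x 0 - xstar‖
  exact ⟨hU, xstar, hxstar, hfix, huniq, herr, hbound, htend⟩
end

section
/- Let W be an M×M real symmetric matrix with eigenvalues λ_1, …, λ_M, and let ρ, τ ∈ ℝ satisfy |τρλ_i − (τρ + τ) + 1| < 1 for every i. Let y ∈ ℝ^M and let x* satisfy x* = τ·W(y + ρx*) − (τρ + τ − 1)·x*. Then the sequence defined by x_0 = 0 and x_{k+1} = τ·W(y + ρ x_k) − (τρ + τ − 1)·x_k converges to x* as k → ∞. -/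
open Matrix

/-- If `W` is symmetric with eigenvalues `λ i` and
`|τρ λ i - (τρ + τ) + 1| < 1` for every `i`, then the generalized SOS sequence
`x 0 = 0`, `x (k+1) = τ • W (y + ρ • x k) - (τρ + τ - 1) • x k` converges to any
steady-state point `x*` of the iteration. -/
theorem sos_generalized_convergence
    (M : ℕ) (W : Matrix (Fin M) (Fin M) ℝ) (hW : W.IsHermitian) (ρ τ : ℝ)
    (heig : ∀ i, |τ * ρ * hW.eigenvalues i - (τ * ρ + τ) + 1| < 1)
    (y : Fin M → ℝ) (xstar : Fin M → ℝ)
    (hstar : xstar = τ • (W *ᵥ (y + ρ • xstar)) - (τ * ρ + τ - 1) • xstar)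
    (x : ℕ → Fin M → ℝ) (hx0 : x 0 = 0)
    (hx : ∀ k, x (k + 1) = τ • (W *ᵥ (y + ρ • x k)) - (τ * ρ + τ - 1) • x k) :
    Filter.Tendsto x Filter.atTop (nhds xstar) := by
  set c : ℝ := τ * ρ + τ - 1 with hc
  set A : Matrix (Fin M) (Fin M) ℝ := (τ * ρ) • W - c • (1 : Matrix (Fin M) (Fin M) ℝ) with hA
  set U : Matrix (Fin M) (Fin M) ℝ := (hW.eigenvectorUnitary : Matrix (Fin M) (Fin M) ℝ) with hU
  have hUs : U * star U = 1 := (Matrix.mem_unitaryGroup_iff).mp (hW.eigenvectorUnitary).2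
  have hsU : star U * U = 1 := (Matrix.mem_unitaryGroup_iff').mp (hW.eigenvectorUnitary).2
  set μ : Fin M → ℝ := fun i => τ * ρ * hW.eigenvalues i - c with hμ
  have hspec : W = U * diagonal (hW.eigenvalues) * star U := by
    have := hW.spectral_theorem
    simpa using this
  have hdiagμ : diagonal μ = (τ * ρ) • diagonal hW.eigenvalues - c • (1 : Matrix (Fin M) (Fin M) ℝ) := by
    ext i j
    by_cases h : i = j <;> simp [hμ, Matrix.diagonal_apply, Matrix.one_apply, h]
  have hAdiag : A = U * diagonal μ * star U := by
    rw [hA, hspec, hdiagμ, Matrix.mul_sub, Matrix.sub_mul, Matrix.mul_smul, Matrix.smul_mul,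
      Matrix.mul_smul, Matrix.smul_mul, mul_one, hUs]
  have hAmul : ∀ v, A *ᵥ v = (τ * ρ) • (W *ᵥ v) - c • v := by
    intro v
    rw [hA, Matrix.sub_mulVec, Matrix.smul_mulVec, Matrix.smul_mulVec,
      Matrix.one_mulVec]
  have herr : ∀ k, x k - xstar = A ^ k *ᵥ (x 0 - xstar) := by
    intro k
    induction k with
    | zero => simp
    | succ k ih =>
      have hstep : x (k + 1) - xstar = A *ᵥ (x k - xstar) := by
        rw [hAmul]
        conv_lhs => rw [hx k, hstar]
        simp only [Matrix.mulVec_add, Matrix.mulVec_smul, Matrix.mulVec_sub]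
        module
      rw [hstep, ih, Matrix.mulVec_mulVec, ← pow_succ']
  have hpow : Filter.Tendsto (fun k => A ^ k) Filter.atTop (nhds 0) := by
    have hAk : ∀ k, A ^ k = U * diagonal (fun i => μ i ^ k) * star U := by
      intro k
      induction k with
      | zero => simp [hUs]
      | succ k ih =>
        rw [pow_succ, ih, hAdiag]
        calc (U * diagonal (fun i => μ i ^ k) * star U) * (U * diagonal μ * star U)
            = U * (diagonal (fun i => μ i ^ k) * ((star U * U) * (diagonal μ * star U))) := by
              noncomm_ring
          _ = U * (diagonal (fun i => μ i ^ k) * diagonal μ) * star U := by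
              rw [hsU]; noncomm_ring
          _ = U * diagonal (fun i => μ i ^ (k + 1)) * star U := by
              rw [Matrix.diagonal_mul_diagonal]
              simp only [← pow_succ]
    rw [show (fun k => A ^ k) = (fun v : Fin M → ℝ => U * diagonal v * star U) ∘ (fun k i => μ i ^ k)
      by funext k; exact hAk k]
    have hcont : Continuous (fun v : Fin M → ℝ => U * diagonal v * star U) :=
      ((continuous_const.matrix_mul (continuous_id.matrix_diagonal)).matrix_mul continuous_const)
    have hlim : Filter.Tendsto (fun k i => μ i ^ k) Filter.atTop (nhds 0) := by
      rw [tendsto_pi_nhds]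
      intro i
      exact tendsto_pow_atTop_nhds_zero_of_abs_lt_one (by simpa [hμ, hc, sub_add] using heig i)
    have h0 : U * diagonal (0 : Fin M → ℝ) * star U = 0 := by
      rw [show (0 : Fin M → ℝ) = (fun _ => (0 : ℝ)) from rfl, Matrix.diagonal_zero,
        Matrix.mul_zero, Matrix.zero_mul]
    have := (hcont.tendsto 0).comp hlim
    simpa [h0] using this
  have hfin : Filter.Tendsto (fun k => xstar + (A ^ k *ᵥ (x 0 - xstar))) Filter.atTop (nhds xstar) := by
    have hcont : Continuous (fun B : Matrix (Fin M) (Fin M) ℝ => B *ᵥ (x 0 - xstar)) :=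
      continuous_id.matrix_mulVec continuous_const
    have h2 := (hcont.tendsto 0).comp hpow
    have h0 : (0 : Matrix (Fin M) (Fin M) ℝ) *ᵥ (x 0 - xstar) = 0 := Matrix.zero_mulVec _
    simpa [h0] using (tendsto_const_nhds.add h2)
  convert hfin using 1
  funext k
  have := herr k
  linear_combination (norm := module) this
end

section
/- Let 0 < λ_min ≤ λ_max ≤ 1 and ρ > 0, and define φ(τ, λ) = |τρλ − τ(ρ+1) + 1|. Set τ* = 2/(2(ρ+1) − ρ(λ_min + λ_max)) and γ* = ρ(λ_max − λ_min)/(2(ρ+1) − ρ(λ_min + λ_max)). Then the denominator 2(ρ+1) − ρ(λ_min + λ_max) is strictly positive, φ(τ*, λ_min) = φ(τ*, λ_max) = γ*, and for every λ ∈ [λ_min, λ_max] one has φ(τ*, λ) ≤ γ*. -/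
/-- For `0 < λmin ≤ λmax ≤ 1`, `ρ > 0`, `φ(τ, λ) = |τρλ - τ(ρ+1) + 1|`,
`τ* = 2/(2(ρ+1) - ρ(λmin + λmax))` and
`γ* = ρ(λmax - λmin)/(2(ρ+1) - ρ(λmin + λmax))`: the denominator is strictly positive,
`φ(τ*, λmin) = φ(τ*, λmax) = γ*`, and `φ(τ*, λ) ≤ γ*` for all `λ ∈ [λmin, λmax]`. -/
theorem sos_optimal_tau_equalizes
    (lamMin lamMax ρ : ℝ)
    (h0 : 0 < lamMin) (h1 : lamMin ≤ lamMax) (h2 : lamMax ≤ 1) (hρ : 0 < ρ)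
    (φ : ℝ → ℝ → ℝ) (hφ : ∀ τ lam, φ τ lam = |τ * ρ * lam - τ * (ρ + 1) + 1|)
    (τstar γstar : ℝ)
    (hτstar : τstar = 2 / (2 * (ρ + 1) - ρ * (lamMin + lamMax)))
    (hγstar : γstar = ρ * (lamMax - lamMin) / (2 * (ρ + 1) - ρ * (lamMin + lamMax))) :
    0 < 2 * (ρ + 1) - ρ * (lamMin + lamMax) ∧
    φ τstar lamMin = γstar ∧ φ τstar lamMax = γstar ∧
    ∀ lam ∈ Set.Icc lamMin lamMax, φ τstar lam ≤ γstar := by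
  have hD : 0 < 2 * (ρ + 1) - ρ * (lamMin + lamMax) := by nlinarith
  have hDne : (2 * (ρ + 1) - ρ * (lamMin + lamMax)) ≠ 0 := ne_of_gt hD
  have key : ∀ lam, φ τstar lam =
      |ρ * (2 * lam - lamMin - lamMax)| / (2 * (ρ + 1) - ρ * (lamMin + lamMax)) := by
    intro lam
    rw [hφ, hτstar]
    have : 2 / (2 * (ρ + 1) - ρ * (lamMin + lamMax)) * ρ * lam -
        2 / (2 * (ρ + 1) - ρ * (lamMin + lamMax)) * (ρ + 1) + 1 =
        ρ * (2 * lam - lamMin - lamMax) / (2 * (ρ + 1) - ρ * (lamMin + lamMax)) := by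
      field_simp
      ring
    rw [this, abs_div, abs_of_pos hD]
  have hγ : γstar = |ρ * (lamMax - lamMin)| / (2 * (ρ + 1) - ρ * (lamMin + lamMax)) := by
    rw [hγstar, abs_of_nonneg (by nlinarith)]
  refine ⟨hD, ?_, ?_, ?_⟩
  · rw [key, hγ]
    congr 1
    rw [show ρ * (2 * lamMin - lamMin - lamMax) = -(ρ * (lamMax - lamMin)) by ring, abs_neg]
  · rw [key, hγ]
    congr 2
    ring
  · rintro lam ⟨hl, hr⟩
    rw [key, hγ]
    rw [div_le_div_iff_of_pos_right hD] <;> try rw [div_le_div_right hD]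
    rw [abs_le]
    constructor
    · rw [neg_le]
      calc -(ρ * (2 * lam - lamMin - lamMax)) ≤ ρ * (lamMax - lamMin) := by nlinarith
        _ ≤ |ρ * (lamMax - lamMin)| := le_abs_self _
    · calc ρ * (2 * lam - lamMin - lamMax) ≤ ρ * (lamMax - lamMin) := by nlinarith
        _ ≤ |ρ * (lamMax - lamMin)| := le_abs_self _
end

section
/- Let 0 < λ_min ≤ λ_max ≤ 1 and ρ > 0, and define φ(τ, λ) = |τρλ − τ(ρ+1) + 1|. Set γ* = ρ(λ_max − λ_min)/(2(ρ+1) − ρ(λ_min + λ_max)). Then for every τ ∈ ℝ, max(φ(τ, λ_min), φ(τ, λ_max)) ≥ γ*, with equality when τ = τ* = 2/(2(ρ+1) − ρ(λ_min + λ_max)). Moreover γ* < 1, so the optimal generalized SOS iteration is a contraction. -/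
/-- For `0 < λmin ≤ λmax ≤ 1`, `ρ > 0`, `φ(τ, λ) = |τρλ - τ(ρ+1) + 1|` and
`γ* = ρ(λmax - λmin)/(2(ρ+1) - ρ(λmin + λmax))`: for every `τ`,
`max (φ(τ, λmin)) (φ(τ, λmax)) ≥ γ*`, with equality at
`τ = τ* = 2/(2(ρ+1) - ρ(λmin + λmax))`; moreover `γ* < 1`. -/
theorem sos_optimal_rate
    (lamMin lamMax ρ : ℝ)
    (h0 : 0 < lamMin) (h1 : lamMin ≤ lamMax) (h2 : lamMax ≤ 1) (hρ : 0 < ρ)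
    (φ : ℝ → ℝ → ℝ) (hφ : ∀ τ lam, φ τ lam = |τ * ρ * lam - τ * (ρ + 1) + 1|)
    (γstar : ℝ)
    (hγstar : γstar = ρ * (lamMax - lamMin) / (2 * (ρ + 1) - ρ * (lamMin + lamMax))) :
    (∀ τ : ℝ, γstar ≤ max (φ τ lamMin) (φ τ lamMax)) ∧
    max (φ (2 / (2 * (ρ + 1) - ρ * (lamMin + lamMax))) lamMin)
        (φ (2 / (2 * (ρ + 1) - ρ * (lamMin + lamMax))) lamMax) = γstar ∧
    γstar < 1 := by
  set a : ℝ := ρ + 1 - ρ * lamMax with ha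
  set b : ℝ := ρ + 1 - ρ * lamMin with hb
  have hapos : 0 < a := by nlinarith
  have hab : a ≤ b := by nlinarith
  have hD : 0 < a + b := by linarith
  have hDeq : 2 * (ρ + 1) - ρ * (lamMin + lamMax) = a + b := by ring
  have hγ : γstar = (b - a) / (a + b) := by
    rw [hγstar]; congr 1 <;> ring
  have hγ0 : 0 ≤ γstar := by
    rw [hγ]; exact div_nonneg (by linarith) (by linarith)
  have hγ1 : γstar < 1 := by
    rw [hγ, div_lt_one hD]; linarith
  have hmin : ∀ τ : ℝ, φ τ lamMin = |1 - τ * b| := by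
    intro τ; rw [hφ]; congr 1; rw [hb]; ring
  have hmax : ∀ τ : ℝ, φ τ lamMax = |1 - τ * a| := by
    intro τ; rw [hφ]; congr 1; rw [ha]; ring
  have hτstar : ∀ τ : ℝ, γstar ≤ max (φ τ lamMin) (φ τ lamMax) := by
    intro τ
    rw [hmin, hmax]
    rcases le_total τ (2 / (a + b)) with h | h
    · refine le_trans ?_ (le_max_right _ _)
      have hτ2 : τ * (a + b) ≤ 2 := (le_div_iff₀ hD).mp h
      have : (b - a) / (a + b) ≤ 1 - τ * a := by
        rw [div_le_iff₀ hD]; nlinarith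
      calc γstar = (b - a) / (a + b) := hγ
        _ ≤ 1 - τ * a := this
        _ ≤ |1 - τ * a| := le_abs_self _
    · refine le_trans ?_ (le_max_left _ _)
      have hb0 : 0 < b := lt_of_lt_of_le hapos hab
      have hτ2 : 2 ≤ τ * (a + b) := (div_le_iff₀ hD).mp h
      have : (b - a) / (a + b) ≤ τ * b - 1 := by
        rw [div_le_iff₀ hD]; nlinarith
      calc γstar = (b - a) / (a + b) := hγ
        _ ≤ τ * b - 1 := this
        _ ≤ |1 - τ * b| := by rw [abs_sub_comm]; exact le_abs_self _
  refine ⟨hτstar, ?_, hγ1⟩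
  rw [hmin, hmax, hDeq, hγ]
  have e1 : 1 - 2 / (a + b) * b = -((b - a) / (a + b)) := by
    field_simp; ring
  have e2 : 1 - 2 / (a + b) * a = (b - a) / (a + b) := by
    field_simp; ring
  rw [e1, e2, abs_neg, abs_of_nonneg (by rw [hγ] at hγ0; exact hγ0), max_self]
end

section
/- Let 0 < λ_min ≤ λ_max ≤ 1 and ρ > 0, and define φ(τ, λ) = |τρλ − τ(ρ+1) + 1|. Then φ(τ, λ) < 1 for every λ ∈ [λ_min, λ_max] if and only if 0 < τ < 2/(ρ + 1 − ρλ_min). -/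
/-- For `0 < λmin ≤ λmax ≤ 1`, `ρ > 0` and
`φ(τ, λ) = |τρλ - τ(ρ+1) + 1|`, one has `φ(τ, λ) < 1` for every `λ ∈ [λmin, λmax]`
if and only if `0 < τ < 2/(ρ + 1 - ρ λmin)`. -/
theorem sos_convergence_range_of_tau
    (lamMin lamMax ρ τ : ℝ)
    (h0 : 0 < lamMin) (h1 : lamMin ≤ lamMax) (h2 : lamMax ≤ 1) (hρ : 0 < ρ)
    (φ : ℝ → ℝ → ℝ) (hφ : ∀ τ lam, φ τ lam = |τ * ρ * lam - τ * (ρ + 1) + 1|) :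
    (∀ lam ∈ Set.Icc lamMin lamMax, φ τ lam < 1) ↔
      (0 < τ ∧ τ < 2 / (ρ + 1 - ρ * lamMin)) := by
  have hcmax : (0:ℝ) < ρ + 1 - ρ * lamMin := by nlinarith
  constructor
  · intro h
    have hm := h lamMin ⟨le_refl _, h1⟩
    rw [hφ, abs_lt] at hm
    constructor
    · nlinarith [hm.1, hm.2]
    · rw [lt_div_iff₀ hcmax]; nlinarith [hm.1]
  · rintro ⟨hτ, hτ2⟩ lam hlam
    rw [hφ, abs_lt]
    have hcpos : (0:ℝ) < ρ + 1 - ρ * lam := by nlinarith [hlam.2]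
    have h2c := (lt_div_iff₀ hcmax).mp hτ2
    have hmono : ρ + 1 - ρ * lam ≤ ρ + 1 - ρ * lamMin := by nlinarith [hlam.1]
    constructor <;> nlinarith [mul_pos hτ hcpos, mul_le_mul_of_nonneg_left hmono hτ.le]
end

section
/- Let n ≥ 1, let R_1, …, R_N be n×M real matrices with R_i R_iᵀ = I_n and Σ_{i=1}^N R_iᵀ R_i = n·I_M, and let Ẑ_1, …, Ẑ_N be n×n real idempotent matrices. Let y ∈ ℝ^M and suppose at step k the vectors p̂_1^k, …, p̂_N^k ∈ ℝ^n and x̂^k ∈ ℝ^M satisfy x̂^k = (1/n) Σ_{i=1}^N R_iᵀ p̂_i^k. Define the sharing-the-disagreement update: q_i^k = p̂_i^k − R_i x̂^k, p_i^{k+1} = R_i y − q_i^k, p̂_i^{k+1} = Ẑ_i p_i^{k+1} (where p̂_i^k = Ẑ_i p_i^k), and x̂^{k+1} = (1/n) Σ_{i=1}^N R_iᵀ p̂_i^{k+1}. Then x̂^{k+1} = W(y + x̂^k) − x̂^k, where W = (1/n) Σ_{i=1}^N R_iᵀ Ẑ_i R_i. Hence the sharing-the-disagreement algorithm coincides with the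 SOS boosting recursion x̂^{k+1} = W(y + x̂^k) − x̂^k. -/
open Matrix

/-- One step of the "sharing the disagreement" algorithm (with fixed
idempotent per-patch denoisers `Z i`, orthonormal-row extraction matrices `R i`, periodic
boundary `∑ i, (R i)ᵀ * R i = n • I`, and patch averaging `x̂ = (1/n) ∑ i (R i)ᵀ p̂ i`)
coincides with one step of the SOS boosting recursion
`x̂⁺ = W (y + x̂) - x̂` with `W = (1/n) ∑ i, (R i)ᵀ * Z i * R i`. -/
theorem sharing_disagreement_equals_sos
    (n N M : ℕ) (hn : 1 ≤ n)
    (R : Fin N → Matrix (Fin n) (Fin M) ℝ)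
    (hRR : ∀ i, R i * (R i)ᵀ = 1)
    (hRsum : ∑ i, (R i)ᵀ * R i = (n : ℝ) • (1 : Matrix (Fin M) (Fin M) ℝ))
    (Z : Fin N → Matrix (Fin n) (Fin n) ℝ)
    (hZidem : ∀ i, Z i * Z i = Z i)
    (y : Fin M → ℝ)
    (p phat : Fin N → Fin n → ℝ) (xk : Fin M → ℝ)
    (hphat : ∀ i, phat i = Z i *ᵥ p i)
    (hxk : xk = (n : ℝ)⁻¹ • ∑ i, (R i)ᵀ *ᵥ phat i)
    (q pnew phatnew : Fin N → Fin n → ℝ) (xnew : Fin M → ℝ)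
    (hq : ∀ i, q i = phat i - R i *ᵥ xk)
    (hpnew : ∀ i, pnew i = R i *ᵥ y - q i)
    (hphatnew : ∀ i, phatnew i = Z i *ᵥ pnew i)
    (hxnew : xnew = (n : ℝ)⁻¹ • ∑ i, (R i)ᵀ *ᵥ phatnew i)
    (W : Matrix (Fin M) (Fin M) ℝ)
    (hW : W = (n : ℝ)⁻¹ • ∑ i, (R i)ᵀ * Z i * R i) :
    xnew = W *ᵥ (y + xk) - xk := by
  have hZphat : ∀ i, Z i *ᵥ phat i = phat i := by
    intro i; rw [hphat, Matrix.mulVec_mulVec, hZidem]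
  have key : ∀ i, (R i)ᵀ *ᵥ phatnew i =
      ((R i)ᵀ * Z i * R i) *ᵥ (y + xk) - (R i)ᵀ *ᵥ phat i := by
    intro i
    have : phatnew i = Z i *ᵥ (R i *ᵥ (y + xk)) - phat i := by
      rw [hphatnew, hpnew, hq, Matrix.mulVec_add, Matrix.mulVec_sub,
        Matrix.mulVec_sub, Matrix.mulVec_add, Matrix.mulVec_mulVec,
        Matrix.mulVec_mulVec, hZphat]
      abel
    rw [this, Matrix.mulVec_sub, Matrix.mulVec_mulVec, Matrix.mulVec_mulVec,
      Matrix.mul_assoc]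
  rw [hxnew, hW]
  have hsum : (∑ i, (R i)ᵀ * Z i * R i) *ᵥ (y + xk)
      = ∑ i, ((R i)ᵀ * Z i * R i) *ᵥ (y + xk) := by
    ext j
    simp [Matrix.mulVec, dotProduct, Matrix.sum_apply, Finset.sum_mul]
    rw [Finset.sum_comm]
  simp only [key, Finset.sum_sub_distrib, smul_sub, ← hxk,
    Matrix.smul_mulVec, hsum]
end
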